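/- arXiv:0907.0942 — 2 statements merged into one kernel-verified Lean document; each statement's English description precedes it below -/
import Mathlib

section
/- Under the Setup with Hypotheses (H2) and (H3), the S-value function w ↦ α_w on adh(L) is uniformly continuous for the prefix metric: for every ε > 0 there exists ℓ ∈ ℕ such that for all w, z ∈ adh(L) agreeing on their first ℓ letters, |α_w − α_z| ≤ ε. -/
open Filter Topology

/-- The prefix of length `ℓ` of an infinite word `w : ℕ → A`. -/
def prefixOf {A : Type*} (w : ℕ → A) (ℓ : ℕ) : List A := List.ofFn (fun i : Fin ℓ => w i)

/-- The set of prefixes of words of a language `L`. -/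
def pref {A : Type*} (L : Set (List A)) : Set (List A) := {u | ∃ v ∈ L, u <+: v}

/-- The adherence of a language. -/
def adh {A : Type*} (L : Set (List A)) : Set (ℕ → A) :=
  {w | ∀ ℓ : ℕ, prefixOf w ℓ ∈ pref L}

/-- The center of a language: the finite prefixes of elements of the adherence. -/
def centre {A : Type*} (L : Set (List A)) : Set (List A) :=
  {u | ∃ w ∈ adh L, u = prefixOf w u.length}

/-- Transition function of a deterministic automaton extended to words. -/
def deltaStar {Q A : Type*} (δ : Q → A → Q) (q : Q) (w : List A) : Q := w.foldl δ q

/-- `ucomp δ F q n` : number of words of length `n` accepted from state `q`. -/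
noncomputable def ucomp {Q A : Type*} (δ : Q → A → Q) (F : Set Q) (q : Q) (n : ℕ) : ℕ :=
  {z : List A | z.length = n ∧ deltaStar δ q z ∈ F}.ncard

/-- `vcomp δ F q n` : number of words of length at most `n` accepted from state `q`. -/
noncomputable def vcomp {Q A : Type*} (δ : Q → A → Q) (F : Set Q) (q : Q) (n : ℕ) : ℕ :=
  ∑ m ∈ Finset.range (n + 1), ucomp δ F q m

open scoped Classical in
/-- For a word `y`, `alphaFin L r y = s₀ + Σ_{x ∈ centre(L), |x| = |y|, x <_lex y} r x`
where `s₀ = 1 - r ε`.  (Words of length `|y|` are enumerated as `List.ofFn f`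
for `f : Fin |y| → A`.) -/
noncomputable def alphaFin {A : Type*} [Fintype A] [LinearOrder A]
    (L : Set (List A)) (r : List A → ℝ) (y : List A) : ℝ :=
  (1 - r []) +
    ∑ f : Fin y.length → A,
      if List.ofFn f ∈ centre L ∧ List.Lex (· < ·) (List.ofFn f) y then r (List.ofFn f)
      else 0

/-!
By (H2), `r` is a flow on the tree of words: `r x ≥ 0` and `r x = ∑ a, r (x a)`, because accepted
words extending `x` split according to their next letter. It vanishes off `centre L`: a word with
only finitely many extensions in `L` has density `0` (Kőnig's lemma). Consequently, along an
infinite word `w`, the approximations `α_{w[0,ℓ)}` increase and `α_{w[0,ℓ)} + r_{w[0,ℓ)}` decrease,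
both to `α_w`, so `α_w` lies in an interval of length `r_{w[0,ℓ)}` determined by the first `ℓ`
letters. Finally, the words `y ∈ centre L` with `r y > ε` form a prefix-closed set that, by (H3)
and Kőnig's lemma again, is finite; beyond their lengths all these intervals are shorter than `ε`.
-/

section Prefixes

variable {Γ : Type*}

lemma length_prefixOf (w : ℕ → Γ) (n : ℕ) : (prefixOf w n).length = n := by
  simp [prefixOf]

lemma prefixOf_succ (w : ℕ → Γ) (n : ℕ) : prefixOf w (n + 1) = prefixOf w n ++ [w n] :=
  List.ofFn_succ_last

lemma take_prefixOf (w : ℕ → Γ) {m n : ℕ} (h : m ≤ n) : (prefixOf w n).take m = prefixOf w m :=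
  List.ext_getElem (by simp [prefixOf, h]) fun _ _ _ => by simp [prefixOf]

lemma prefixOf_prefix (w : ℕ → Γ) {m n : ℕ} (h : m ≤ n) : prefixOf w m <+: prefixOf w n :=
  take_prefixOf w h ▸ List.take_prefix _ _

lemma prefixOf_eq_of_forall_lt {w z : ℕ → Γ} {n : ℕ} (h : ∀ i < n, w i = z i) :
    prefixOf w n = prefixOf z n :=
  congrArg List.ofFn (funext fun i => h i i.isLt)

lemma eq_prefixOf_length_of_prefix {w : ℕ → Γ} {u : List Γ} {n : ℕ}
    (h : u <+: prefixOf w n) : u = prefixOf w u.length := by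
  have hlen : u.length ≤ n := length_prefixOf w n ▸ h.length_le
  conv_lhs => rw [List.prefix_iff_eq_take.mp h]
  exact take_prefixOf w hlen

lemma prefixOf_mem_centre {L : Set (List Γ)} {w : ℕ → Γ} (hw : w ∈ adh L) (n : ℕ) :
    prefixOf w n ∈ centre L :=
  ⟨w, hw, by rw [length_prefixOf]⟩

lemma mem_centre_of_prefix {L : Set (List Γ)} {u v : List Γ} (huv : u <+: v)
    (hv : v ∈ centre L) : u ∈ centre L := by
  obtain ⟨w, hw, hv⟩ := hv
  exact ⟨w, hw, eq_prefixOf_length_of_prefix (hv ▸ huv)⟩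

lemma centre_subset_pref (L : Set (List Γ)) : centre L ⊆ pref L := by
  rintro _ ⟨w, hw, hu⟩
  exact hu ▸ hw _

/-- Kőnig's lemma for a prefix-closed set of words. -/
theorem exists_forall_prefixOf_mem_of_infinite [Finite Γ] {T : Set (List Γ)}
    (hT : ∀ ⦃u v⦄, u <+: v → v ∈ T → u ∈ T) (hinf : T.Infinite) :
    ∃ w : ℕ → Γ, ∀ n, prefixOf w n ∈ T := by
  let P : List Γ → Prop := fun u => {v ∈ T | u <+: v}.Infinite
  have hstep : ∀ u, P u → ∃ a, P (u ++ [a]) := by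
    intro u hu
    by_contra! hfin
    simp only [P, Set.not_infinite] at hfin
    refine hu (((Set.finite_iUnion hfin).insert u).subset ?_)
    rintro v ⟨hvT, t, rfl⟩
    cases t with
    | nil => simp
    | cons b t => exact Or.inr (Set.mem_iUnion.mpr ⟨b, hvT, t, by simp⟩)
  have hroot : P [] := by simpa [P] using hinf
  let branch : ℕ → {u // P u} := fun n =>
    Nat.rec ⟨[], hroot⟩ (fun _ u => ⟨u.1 ++ [(hstep u.1 u.2).choose],
      (hstep u.1 u.2).choose_spec⟩) n
  let w : ℕ → Γ := fun n => (hstep _ (branch n).2).choose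
  have hw : ∀ n, prefixOf w n = (branch n).1 := by
    intro n
    induction n with
    | zero => rfl
    | succ n ih => rw [prefixOf_succ, ih]
  refine ⟨w, fun n => ?_⟩
  obtain ⟨v, hvT, huv⟩ := (branch n).2.nonempty
  exact hw n ▸ hT huv hvT

theorem finite_extensions_of_notMem_centre [Finite Γ] {L : Set (List Γ)} (hpc : pref L = L)
    {x : List Γ} (hx : x ∉ centre L) : {z | x ++ z ∈ L}.Finite := by
  have hclosed : ∀ ⦃u v⦄, u <+: v → v ∈ {z | x ++ z ∈ L} → u ∈ {z | x ++ z ∈ L} := by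
    intro u v huv hv
    rw [Set.mem_ofPred, ← hpc]
    exact ⟨x ++ v, hv, (List.prefix_append_right_inj x).mpr huv⟩
  by_contra hinf
  obtain ⟨w, hw⟩ := exists_forall_prefixOf_mem_of_infinite hclosed hinf
  let xw : ℕ → Γ := fun i => if h : i < x.length then x[i] else w (i - x.length)
  have hxw : ∀ n, prefixOf xw (x.length + n) = x ++ prefixOf w n := fun n =>
    List.ext_getElem (by simp [length_prefixOf]) fun i _ _ => by
      by_cases hi : i < x.length <;> simp [prefixOf, xw, List.getElem_append, hi]
  refine hx ⟨xw, fun n => ⟨x ++ prefixOf w n, hw n, hxw n ▸ prefixOf_prefix xw (by omega)⟩, ?_⟩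
  simpa [prefixOf] using (hxw 0).symm

end Prefixes

section Counting

variable {Γ Q : Type*}

lemma deltaStar_append (δ : Q → Γ → Q) (q : Q) (x z : List Γ) :
    deltaStar δ q (x ++ z) = deltaStar δ (deltaStar δ q x) z :=
  List.foldl_append

variable [Fintype Γ]

open Classical in
lemma ucomp_eq_sum (δ : Q → Γ → Q) (F : Set Q) (q : Q) (n : ℕ) :
    ucomp δ F q n = ∑ f : Fin n → Γ, if deltaStar δ q (List.ofFn f) ∈ F then 1 else 0 := by
  have hset : {z : List Γ | z.length = n ∧ deltaStar δ q z ∈ F}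
      = List.ofFn '' {f : Fin n → Γ | deltaStar δ q (List.ofFn f) ∈ F} := by
    ext z
    constructor
    · rintro ⟨rfl, hz⟩
      exact ⟨z.get, by rwa [Set.mem_ofPred, List.ofFn_get], List.ofFn_get z⟩
    · rintro ⟨f, hf, rfl⟩
      exact ⟨List.length_ofFn, hf⟩
  rw [ucomp, hset, Set.ncard_image_of_injective _ List.ofFn_injective,
    Set.ncard_eq_toFinset_card', Set.toFinset_ofPred, Finset.card_filter]

lemma ucomp_succ (δ : Q → Γ → Q) (F : Set Q) (q : Q) (m : ℕ) :
    ucomp δ F q (m + 1) = ∑ a : Γ, ucomp δ F (δ q a) m := by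
  classical
  simp only [ucomp_eq_sum]
  rw [← (Fin.consEquiv fun _ => Γ).sum_comp, Fintype.sum_prod_type]
  refine Fintype.sum_congr _ _ fun a => Fintype.sum_congr _ _ fun f => ?_
  change ite (deltaStar δ q (List.ofFn (Fin.cons a f : Fin (m + 1) → Γ)) ∈ F) _ _ = _
  rw [List.ofFn_cons]
  rfl

end Counting

section Density

variable {Γ Q : Type*}

/-- Hypothesis (H2), the limits being named `r x`. -/
def HasExtensionDensity (δ : Q → Γ → Q) (F : Set Q) (q0 : Q) (r : List Γ → ℝ) : Prop :=
  ∀ x : List Γ, Tendsto (fun n : ℕ =>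
      (ucomp δ F (deltaStar δ q0 x) (n - x.length) : ℝ) / (vcomp δ F q0 n : ℝ)) atTop (𝓝 (r x))

/-- A flow, in the sense of Lyons–Peres, on the tree of words, carried by `centre L`. -/
structure IsCentreFlow [Fintype Γ] (L : Set (List Γ)) (r : List Γ → ℝ) : Prop where
  nonneg : ∀ x, 0 ≤ r x
  eq_sum_append : ∀ x, r x = ∑ a : Γ, r (x ++ [a])
  eq_zero_of_notMem : ∀ x ∉ centre L, r x = 0

namespace HasExtensionDensity

variable {δ : Q → Γ → Q} {F : Set Q} {q0 : Q} {r : List Γ → ℝ}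

lemma nonneg (hr : HasExtensionDensity δ F q0 r) (x : List Γ) : 0 ≤ r x :=
  ge_of_tendsto' (hr x) fun _ => by positivity

variable [Fintype Γ]

lemma eq_sum_append (hr : HasExtensionDensity δ F q0 r) (x : List Γ) :
    r x = ∑ a : Γ, r (x ++ [a]) := by
  refine tendsto_nhds_unique ((hr x).congr' ?_) (tendsto_finsetSum _ fun a _ => hr (x ++ [a]))
  filter_upwards [eventually_gt_atTop x.length] with n hn
  obtain ⟨m, hm⟩ : ∃ m, n - x.length = m + 1 := ⟨n - x.length - 1, by omega⟩
  have hlen : ∀ a : Γ, n - (x ++ [a]).length = m := fun a => by simp; omega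
  simp only [hm, hlen, ucomp_succ, deltaStar_append, Nat.cast_sum, Finset.sum_div]
  rfl

lemma eq_zero_of_notMem_centre (hr : HasExtensionDensity δ F q0 r) {L : Set (List Γ)}
    (hpc : pref L = L) (hL : L = {x | deltaStar δ q0 x ∈ F}) {x : List Γ}
    (hx : x ∉ centre L) : r x = 0 := by
  obtain ⟨N, hN⟩ := ((finite_extensions_of_notMem_centre hpc hx).image List.length).bddAbove
  refine tendsto_nhds_unique ((hr x).congr' ?_) tendsto_const_nhds
  filter_upwards [eventually_gt_atTop (x.length + N)] with n hn
  have hempty : {z : List Γ | z.length = n - x.length ∧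
      deltaStar δ (deltaStar δ q0 x) z ∈ F} = ∅ := by
    refine Set.eq_empty_of_forall_notMem fun z ⟨hlen, hz⟩ => ?_
    have hxz : x ++ z ∈ L := by
      rw [hL, Set.mem_ofPred_eq, deltaStar_append]
      exact hz
    have : z.length ≤ N := hN ⟨z, hxz, rfl⟩
    omega
  simp [ucomp, hempty]

lemma isCentreFlow (hr : HasExtensionDensity δ F q0 r) {L : Set (List Γ)} (hpc : pref L = L)
    (hL : L = {x | deltaStar δ q0 x ∈ F}) : IsCentreFlow L r :=
  ⟨hr.nonneg, hr.eq_sum_append, fun _ hx => hr.eq_zero_of_notMem_centre hpc hL hx⟩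

end HasExtensionDensity

end Density

section LexLower

variable {Γ : Type*} [LinearOrder Γ]

lemma lex_append_singleton_iff {u v : List Γ} (h : u.length = v.length) {b a : Γ} :
    List.Lex (· < ·) (u ++ [b]) (v ++ [a]) ↔ List.Lex (· < ·) u v ∨ u = v ∧ b < a := by
  induction u generalizing v with
  | nil =>
    obtain rfl := List.eq_nil_of_length_eq_zero h.symm
    simp [List.lex_irrefl]
  | cons c u ih =>
    obtain ⟨d, v, rfl⟩ := List.exists_cons_of_length_eq_add_one h.symm
    simp only [List.cons_append, List.cons_lex_cons_iff, ih (by simpa using h), List.cons.injEq]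
    tauto

variable [Fintype Γ]

open scoped Classical in
/-- `n` is kept apart from `y.length` so that it can be rewritten without touching the type
`Fin y.length`. -/
noncomputable def lexLowerSum (r : List Γ → ℝ) (n : ℕ) (y : List Γ) : ℝ :=
  ∑ f : Fin n → Γ, if List.Lex (· < ·) (List.ofFn f) y then r (List.ofFn f) else 0

variable {L : Set (List Γ)} {r : List Γ → ℝ}

lemma alphaFin_eq_lexLowerSum (h0 : ∀ x ∉ centre L, r x = 0) (y : List Γ) :
    alphaFin L r y = 1 - r [] + lexLowerSum r y.length y := by
  classical
  rw [alphaFin, lexLowerSum]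
  congr 1
  refine Fintype.sum_congr _ _ fun f => ?_
  by_cases hf : List.ofFn f ∈ centre L
  · simp [hf]
  · simp [hf, h0 _ hf]

lemma lexLowerSum_append (hsum : ∀ x, r x = ∑ a : Γ, r (x ++ [a])) (y : List Γ) (a : Γ) :
    lexLowerSum r (y.length + 1) (y ++ [a]) =
      lexLowerSum r y.length y + ∑ b : Γ, if b < a then r (y ++ [b]) else 0 := by
  classical
  have hsplit : ∀ (b : Γ) (f : Fin y.length → Γ),
      (if List.Lex (· < ·) (List.ofFn f ++ [b]) (y ++ [a]) then r (List.ofFn f ++ [b]) else 0) =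
        (if List.Lex (· < ·) (List.ofFn f) y then r (List.ofFn f ++ [b]) else 0) +
          if f = y.get ∧ b < a then r (y ++ [b]) else 0 := by
    intro b f
    by_cases hfy : f = y.get
    · subst hfy
      simp only [List.ofFn_get, lex_append_singleton_iff rfl]
      simp [List.lex_irrefl]
    · have hne : List.ofFn f ≠ y := fun h => hfy (by rw [← List.ofFn_inj, h, List.ofFn_get])
      simp [lex_append_singleton_iff List.length_ofFn, hne, hfy]
  have hlower : ∀ f : Fin y.length → Γ,
      ∑ b : Γ, (if List.Lex (· < ·) (List.ofFn f) y then r (List.ofFn f ++ [b]) else 0) =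
        if List.Lex (· < ·) (List.ofFn f) y then r (List.ofFn f) else 0 := by
    intro f
    split_ifs
    · exact (hsum _).symm
    · simp
  unfold lexLowerSum
  rw [← (Fin.snocEquiv fun _ => Γ).sum_comp, Fintype.sum_prod_type]
  simp only [Fin.snocEquiv, Equiv.coe_fn_mk, List.ofFn_succ_last, Fin.snoc_castSucc,
    Fin.snoc_last, hsplit, Finset.sum_add_distrib]
  rw [Finset.sum_comm, Fintype.sum_congr _ _ hlower]
  simp [ite_and]

end LexLower

namespace IsCentreFlow

variable {Γ : Type*} [Fintype Γ] {L : Set (List Γ)} {r : List Γ → ℝ}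

lemma le_of_prefix (hr : IsCentreFlow L r) {u v : List Γ} (huv : u <+: v) : r v ≤ r u := by
  obtain ⟨t, rfl⟩ := huv
  induction t using List.reverseRecOn with
  | nil => simp
  | append_singleton t a ih =>
    rw [← List.append_assoc]
    refine le_trans ?_ ih
    rw [hr.eq_sum_append (u ++ t)]
    exact Finset.single_le_sum (f := fun b => r (u ++ t ++ [b])) (fun b _ => hr.nonneg _)
      (Finset.mem_univ a)

lemma exists_forall_le_of_length_ge (hr : IsCentreFlow L r)
    (hsmall : ∀ w ∈ adh L, Tendsto (fun ℓ => r (prefixOf w ℓ)) atTop (𝓝 0))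
    {ε : ℝ} (hε : 0 < ε) : ∃ N, ∀ y ∈ centre L, N ≤ y.length → r y ≤ ε := by
  let T := {y | y ∈ centre L ∧ ε < r y}
  have hT : T.Finite := by
    by_contra hinf
    obtain ⟨w, hw⟩ := exists_forall_prefixOf_mem_of_infinite (T := T)
      (fun u v huv hv => ⟨mem_centre_of_prefix huv hv.1, hv.2.trans_le (hr.le_of_prefix huv)⟩)
      hinf
    have hwL : w ∈ adh L := fun ℓ => centre_subset_pref L (hw ℓ).1
    have : ε ≤ 0 := ge_of_tendsto' (hsmall w hwL) fun ℓ => (hw ℓ).2.le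
    linarith
  obtain ⟨N, hN⟩ := (hT.image List.length).bddAbove
  refine ⟨N + 1, fun y hy hlen => not_lt.mp fun hlt => ?_⟩
  have := hN ⟨y, ⟨hy, hlt⟩, rfl⟩
  omega

variable [LinearOrder Γ]

lemma alphaFin_append (hr : IsCentreFlow L r) (y : List Γ) (a : Γ) :
    alphaFin L r (y ++ [a]) = alphaFin L r y + ∑ b : Γ, if b < a then r (y ++ [b]) else 0 := by
  rw [alphaFin_eq_lexLowerSum hr.eq_zero_of_notMem, alphaFin_eq_lexLowerSum hr.eq_zero_of_notMem,
    List.length_append, List.length_singleton, lexLowerSum_append hr.eq_sum_append, add_assoc]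

lemma alphaFin_le_append (hr : IsCentreFlow L r) (y : List Γ) (a : Γ) :
    alphaFin L r y ≤ alphaFin L r (y ++ [a]) := by
  rw [hr.alphaFin_append]
  refine le_add_of_nonneg_right (Finset.sum_nonneg fun b _ => ?_)
  split_ifs
  exacts [hr.nonneg _, le_rfl]

lemma alphaFin_append_add_le (hr : IsCentreFlow L r) (y : List Γ) (a : Γ) :
    alphaFin L r (y ++ [a]) + r (y ++ [a]) ≤ alphaFin L r y + r y := by
  classical
  have hle : (∑ b : Γ, if b < a then r (y ++ [b]) else 0) + r (y ++ [a]) ≤ r y := by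
    have hdiag : r (y ++ [a]) = ∑ b : Γ, if b = a then r (y ++ [b]) else 0 := by simp
    rw [hr.eq_sum_append y, hdiag, ← Finset.sum_add_distrib]
    refine Finset.sum_le_sum fun b _ => ?_
    rcases lt_trichotomy b a with hb | rfl | hb
    · simp [hb, hb.ne]
    · simp
    · simp [hb.not_gt, hb.ne', hr.nonneg]
  rw [hr.alphaFin_append]
  linarith

lemma mem_Icc_of_tendsto_alphaFin (hr : IsCentreFlow L r) {w : ℕ → Γ}
    (hw : Tendsto (fun ℓ => r (prefixOf w ℓ)) atTop (𝓝 0)) {aw : ℝ}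
    (hlim : Tendsto (fun k => alphaFin L r (prefixOf w k)) atTop (𝓝 aw)) (ℓ : ℕ) :
    aw ∈ Set.Icc (alphaFin L r (prefixOf w ℓ))
      (alphaFin L r (prefixOf w ℓ) + r (prefixOf w ℓ)) := by
  have hmono : Monotone fun k => alphaFin L r (prefixOf w k) :=
    monotone_nat_of_le_succ fun k => prefixOf_succ w k ▸ hr.alphaFin_le_append _ _
  have hanti : Antitone fun k => alphaFin L r (prefixOf w k) + r (prefixOf w k) :=
    antitone_nat_of_succ_le fun k => prefixOf_succ w k ▸ hr.alphaFin_append_add_le _ _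
  exact ⟨hmono.ge_of_tendsto hlim ℓ, hanti.le_of_tendsto (by simpa using hlim.add hw) ℓ⟩

end IsCentreFlow

theorem stmt_16_general {Γ : Type*} [Fintype Γ] [LinearOrder Γ]
    (L : Set (List Γ)) (hpc : pref L = L)
    {Q : Type*} (q0 : Q) (δ : Q → Γ → Q) (F : Set Q)
    (hL : L = {x | deltaStar δ q0 x ∈ F})
    (r : List Γ → ℝ)
    (hH2 : ∀ x : List Γ,
      Tendsto (fun n : ℕ =>
          (ucomp δ F (deltaStar δ q0 x) (n - x.length) : ℝ) / (vcomp δ F q0 n : ℝ))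
        atTop (𝓝 (r x)))
    (hH3 : ∀ w ∈ adh L, Tendsto (fun ℓ : ℕ => r (prefixOf w ℓ)) atTop (𝓝 0)) :
    ∀ ε : ℝ, 0 < ε → ∃ ℓ : ℕ,
      ∀ w ∈ adh L, ∀ z ∈ adh L, ∀ aw az : ℝ,
        Tendsto (fun k : ℕ => alphaFin L r (prefixOf w k)) atTop (𝓝 aw) →
        Tendsto (fun k : ℕ => alphaFin L r (prefixOf z k)) atTop (𝓝 az) →
        (∀ i < ℓ, w i = z i) → |aw - az| ≤ ε := by
  intro ε hε
  have hr : IsCentreFlow L r := HasExtensionDensity.isCentreFlow hH2 hpc hL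
  obtain ⟨N, hN⟩ := hr.exists_forall_le_of_length_ge hH3 hε
  refine ⟨N, fun w hw z hz aw az hlw hlz hwz => ?_⟩
  have hsmall : r (prefixOf w N) ≤ ε :=
    hN _ (prefixOf_mem_centre hw N) (length_prefixOf w N).ge
  have hmw := hr.mem_Icc_of_tendsto_alphaFin (hH3 w hw) hlw N
  have hmz := hr.mem_Icc_of_tendsto_alphaFin (hH3 z hz) hlz N
  rw [← prefixOf_eq_of_forall_lt hwz] at hmz
  exact abs_sub_le_iff.mpr ⟨by linarith [hmw.2, hmz.1], by linarith [hmw.1, hmz.2]⟩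

theorem stmt_16 {Γ : Type*} [Fintype Γ] [LinearOrder Γ]
    (L : Set (List Γ)) (hLinf : L.Infinite) (hpc : pref L = L)
    {Q : Type*} (q0 : Q) (δ : Q → Γ → Q) (F : Set Q)
    (hacc : ∀ q : Q, ∃ x : List Γ, deltaStar δ q0 x = q)
    (hL : L = {x | deltaStar δ q0 x ∈ F})
    (r : List Γ → ℝ)
    (hH2 : ∀ x : List Γ,
      Tendsto (fun n : ℕ =>
          (ucomp δ F (deltaStar δ q0 x) (n - x.length) : ℝ) / (vcomp δ F q0 n : ℝ))
        atTop (𝓝 (r x)))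
    (hH3 : ∀ w ∈ adh L, Tendsto (fun ℓ : ℕ => r (prefixOf w ℓ)) atTop (𝓝 0)) :
    ∀ ε : ℝ, 0 < ε → ∃ ℓ : ℕ,
      ∀ w ∈ adh L, ∀ z ∈ adh L, ∀ aw az : ℝ,
        Tendsto (fun k : ℕ => alphaFin L r (prefixOf w k)) atTop (𝓝 aw) →
        Tendsto (fun k : ℕ => alphaFin L r (prefixOf z k)) atTop (𝓝 az) →
        (∀ i < ℓ, w i = z i) → |aw - az| ≤ ε :=
  stmt_16_general L hpc q0 δ F hL r hH2 hH3
end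

section
/- Let D be the Dyck language over the two-letter alphabet {a, b} and, for m, n ∈ ℕ, let u_{d_m}(n) := card{ w ∈ {a,b}ⁿ : aᵐ w ∈ D }. Then for every m ≥ 0, the series Σ_{i=m}^{∞} u_{d_{2m}}(2i) · 4^{−i} converges with sum 2, and the series Σ_{i=m}^{∞} u_{d_{2m+1}}(2i+1) · 4^{−i} converges with sum 4. -/
/-- The two-letter alphabet `{a, b}` for the Dyck language
(`a` is the opening parenthesis, `b` the closing one). -/
inductive Letter : Type
  | a : Letter
  | b : Letter
  deriving DecidableEq

/-- The Dyck language: words with as many `a`'s as `b`'s, every prefix of which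
has at least as many `a`'s as `b`'s. -/
def Dyck : Set (List Letter) :=
  {w | w.count Letter.a = w.count Letter.b ∧
    ∀ u : List Letter, u <+: w → u.count Letter.b ≤ u.count Letter.a}

/-- `uDyck m n` : the number of words `w` of length `n` such that `aᵐ w` is a Dyck word,
i.e. the number of words of length `n` accepted from the state reached by `aᵐ` in the
minimal automaton of the Dyck language. -/
noncomputable def uDyck (m n : ℕ) : ℕ :=
  {w : List Letter | w.length = n ∧ (List.replicate m Letter.a ++ w) ∈ Dyck}.ncard

/-
For `k : ℕ` let `v k n` be the number of words `w` of length `n` such that `aᵏ w` is a prefix of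
a Dyck word. Appending a letter to such a `w` doubles the count, except that from a word
accepted from `aᵏ` the letter `b` leaves the prefixes; hence `v k (n+1) = 2 v k n - u k n`, and
`∑_{n<N} u k n / 2ⁿ = 2 - 2 v k N / 2ᴺ`. The densities `v k N / 2ᴺ` decrease to limits `ℓ k`
satisfying `2 ℓ (k+1) = ℓ (k+2) + ℓ k` and `2 ℓ 0 = ℓ 1`, so `ℓ k = (k+1) ℓ 0`; since `ℓ k ≤ 1`,
all limits vanish. Thus `∑ₙ u k n / 2ⁿ = 2` for every `k`, and the two series of the theorem are
this sum restricted to the `n ≡ k (mod 2)` on which `u k n` can be nonzero, with `4⁻ⁱ = 2⁻²ⁱ`.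
-/

open Filter Topology

instance : Fintype Letter :=
  ⟨{Letter.a, Letter.b}, fun x => by cases x <;> simp⟩

lemma count_a_add_count_b (w : List Letter) :
    w.count Letter.a + w.count Letter.b = w.length := by
  induction w with
  | nil => rfl
  | cons x w ih => cases x <;> simp <;> omega

lemma replicate_append_mem_dyck_iff (k : ℕ) (w : List Letter) :
    List.replicate k Letter.a ++ w ∈ Dyck ↔
      k + w.count Letter.a = w.count Letter.b ∧
        ∀ u : List Letter, u <+: w → u.count Letter.b ≤ k + u.count Letter.a := by
  have hb : (List.replicate k Letter.a).count Letter.b = 0 := by simp [List.count_replicate]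
  simp only [Dyck, Set.mem_ofPred_eq, List.count_append, List.count_replicate_self, hb]
  refine and_congr (by omega) ⟨fun h u hu => ?_, fun h u hu => ?_⟩
  · simpa [List.count_append, List.count_replicate] using
      h _ ((List.prefix_append_right_inj _).mpr hu)
  · rcases List.prefix_or_prefix_of_prefix hu (List.prefix_append _ w) with hrep | ⟨v, rfl⟩
    · have : u.count Letter.b = 0 :=
        List.count_eq_zero.mpr fun hb => by simpa using List.eq_of_mem_replicate (hrep.subset hb)
      omega
    · have := h v ((List.prefix_append_right_inj _).mp hu)
      simp [List.count_append, List.count_replicate]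
      omega

lemma replicate_succ_append_b_cons_mem_dyck_iff (k : ℕ) (w : List Letter) :
    List.replicate (k + 1) Letter.a ++ Letter.b :: w ∈ Dyck ↔
      List.replicate k Letter.a ++ w ∈ Dyck := by
  simp only [replicate_append_mem_dyck_iff, List.prefix_cons_iff, forall_eq_or_imp,
    List.count_nil, zero_le, true_and]
  refine and_congr (by simp; omega) ⟨fun h u hu => ?_, fun h u => ?_⟩
  · simpa [List.count_cons, Nat.add_right_comm] using h (Letter.b :: u) ⟨u, rfl, hu⟩
  · rintro ⟨v, rfl, hv⟩
    simpa [List.count_cons, Nat.add_right_comm] using h v hv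

lemma b_cons_not_mem_dyck (w : List Letter) : Letter.b :: w ∉ Dyck := fun h => by
  simpa using h.2 [Letter.b] (List.cons_prefix_cons.mpr ⟨rfl, List.nil_prefix⟩)

lemma ncard_setOf_length_succ (P : List Letter → Prop) (n : ℕ) :
    {w | w.length = n + 1 ∧ P w}.ncard =
      {w | w.length = n ∧ P (Letter.a :: w)}.ncard +
        {w | w.length = n ∧ P (Letter.b :: w)}.ncard := by
  have hfin (x : Letter) : {w | w.length = n ∧ P (x :: w)}.Finite :=
    (List.finite_length_eq Letter n).subset fun _ hw => hw.1
  have hsplit : {w | w.length = n + 1 ∧ P w} =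
      List.cons Letter.a '' {w | w.length = n ∧ P (Letter.a :: w)} ∪
        List.cons Letter.b '' {w | w.length = n ∧ P (Letter.b :: w)} := by
    ext (_ | ⟨x, w⟩)
    · simp
    · cases x <;> simp
  rw [hsplit, Set.ncard_union_eq _ ((hfin _).image _) ((hfin _).image _),
    Set.ncard_image_of_injective _ List.cons_injective,
    Set.ncard_image_of_injective _ List.cons_injective]
  rw [Set.disjoint_left]
  rintro _ ⟨_, -, rfl⟩ ⟨_, -, h⟩
  cases h

lemma uDyck_eq_zero_of_forall_ne {k n : ℕ} (h : ∀ j, n ≠ k + 2 * j) : uDyck k n = 0 := by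
  by_contra hne
  obtain ⟨w, rfl, hw⟩ := Set.nonempty_of_ncard_ne_zero hne
  have := ((replicate_append_mem_dyck_iff k w).mp hw).1
  exact h (w.count Letter.a) (by have := count_a_add_count_b w; omega)

lemma uDyck_zero_zero : uDyck 0 0 = 1 := by
  have : {w : List Letter | w.length = 0 ∧ List.replicate 0 Letter.a ++ w ∈ Dyck} = {[]} := by
    ext w
    simp only [Set.mem_ofPred_eq, Set.mem_singleton_iff, List.length_eq_zero_iff,
      and_iff_left_iff_imp]
    rintro rfl
    exact ⟨rfl, fun u hu => by simp [List.prefix_nil.mp hu]⟩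
  rw [uDyck, this, Set.ncard_singleton]

lemma uDyck_eq_zero_of_lt {k n : ℕ} (h : n < k) : uDyck k n = 0 :=
  uDyck_eq_zero_of_forall_ne fun _ => by omega

lemma uDyck_succ_zero (k : ℕ) : uDyck (k + 1) 0 = 0 :=
  uDyck_eq_zero_of_lt k.succ_pos

lemma uDyck_zero_succ (n : ℕ) : uDyck 0 (n + 1) = uDyck 1 n := by
  rw [uDyck, ncard_setOf_length_succ]
  simp [b_cons_not_mem_dyck, uDyck]

lemma uDyck_succ_succ (k n : ℕ) : uDyck (k + 1) (n + 1) = uDyck (k + 2) n + uDyck k n := by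
  rw [uDyck, ncard_setOf_length_succ]
  simp only [replicate_succ_append_b_cons_mem_dyck_iff, uDyck,
    List.replicate_succ' (n := k + 1), List.append_assoc, List.singleton_append]

lemma eq_zero_of_abs_le_of_two_mul_eq {f : ℕ → ℝ} {C : ℝ} (hC : ∀ k, |f k| ≤ C)
    (h0 : 2 * f 0 = f 1) (hstep : ∀ k, 2 * f (k + 1) = f (k + 2) + f k) : f = 0 := by
  have hlin : ∀ k, f k = (k + 1) * f 0 ∧ f (k + 1) = (k + 2) * f 0 := by
    intro k
    induction k with
    | zero => constructor <;> push_cast <;> linarith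
    | succ k ih =>
      refine ⟨ih.2.trans (by push_cast; ring), ?_⟩
      have := hstep k
      rw [ih.1, ih.2] at this
      push_cast
      linarith
  suffices f 0 = 0 by ext k; simp [(hlin k).1, this]
  by_contra hne
  obtain ⟨k, hk⟩ := exists_nat_gt (C / |f 0|)
  have hpos : 0 < |f 0| := abs_pos.mpr hne
  have := hC k
  rw [(hlin k).1, abs_mul, abs_of_nonneg (by positivity : (0 : ℝ) ≤ k + 1)] at this
  rw [div_lt_iff₀ hpos] at hk
  nlinarith

-- The number of words `w` of length `n` such that `aᵏ w` is a prefix of a Dyck word, introduced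
-- through its recursion alone: it is never related to `Dyck` directly.
def dyckPrefixCount : ℕ → ℕ → ℕ
  | _, 0 => 1
  | 0, n + 1 => dyckPrefixCount 1 n
  | k + 1, n + 1 => dyckPrefixCount (k + 2) n + dyckPrefixCount k n

lemma uDyck_add_dyckPrefixCount_succ (k n : ℕ) :
    uDyck k n + dyckPrefixCount k (n + 1) = 2 * dyckPrefixCount k n := by
  induction n generalizing k with
  | zero => cases k <;> simp [dyckPrefixCount, uDyck_zero_zero, uDyck_succ_zero]
  | succ n ih =>
    cases k with
    | zero =>
      rw [uDyck_zero_succ, dyckPrefixCount.eq_2, dyckPrefixCount.eq_2]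
      exact ih 1
    | succ k =>
      rw [uDyck_succ_succ, dyckPrefixCount.eq_3 k (n + 1), dyckPrefixCount.eq_3 k n]
      have := ih k
      have := ih (k + 2)
      omega

lemma dyckPrefixCount_le_two_pow (k n : ℕ) : dyckPrefixCount k n ≤ 2 ^ n := by
  induction n generalizing k with
  | zero => simp [dyckPrefixCount]
  | succ n ih =>
    have := uDyck_add_dyckPrefixCount_succ k n
    have := ih k
    rw [pow_succ]
    omega

noncomputable def dyckPrefixDensity (k n : ℕ) : ℝ := dyckPrefixCount k n / 2 ^ n

lemma dyckPrefixDensity_nonneg (k n : ℕ) : 0 ≤ dyckPrefixDensity k n := by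
  unfold dyckPrefixDensity; positivity

lemma dyckPrefixDensity_le_one (k n : ℕ) : dyckPrefixDensity k n ≤ 1 := by
  rw [dyckPrefixDensity, div_le_one (by positivity)]
  exact_mod_cast dyckPrefixCount_le_two_pow k n

lemma uDyck_div_two_pow (k n : ℕ) :
    (uDyck k n : ℝ) / 2 ^ n = 2 * dyckPrefixDensity k n - 2 * dyckPrefixDensity k (n + 1) := by
  have h : (uDyck k n : ℝ) + dyckPrefixCount k (n + 1) = 2 * dyckPrefixCount k n := by
    exact_mod_cast uDyck_add_dyckPrefixCount_succ k n
  rw [dyckPrefixDensity, dyckPrefixDensity, pow_succ]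
  field_simp
  linarith

lemma antitone_dyckPrefixDensity (k : ℕ) : Antitone (dyckPrefixDensity k) :=
  antitone_nat_of_succ_le fun n => by
    have := uDyck_div_two_pow k n
    have : (0 : ℝ) ≤ uDyck k n / 2 ^ n := by positivity
    linarith

lemma dyckPrefixDensity_zero_succ (n : ℕ) :
    2 * dyckPrefixDensity 0 (n + 1) = dyckPrefixDensity 1 n := by
  simp only [dyckPrefixDensity, dyckPrefixCount, pow_succ]
  field_simp

lemma dyckPrefixDensity_succ_succ (k n : ℕ) :
    2 * dyckPrefixDensity (k + 1) (n + 1) =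
      dyckPrefixDensity (k + 2) n + dyckPrefixDensity k n := by
  simp only [dyckPrefixDensity, dyckPrefixCount, pow_succ]
  push_cast
  field_simp

lemma tendsto_dyckPrefixDensity (k : ℕ) : Tendsto (dyckPrefixDensity k) atTop (𝓝 0) := by
  set L : ℕ → ℝ := fun j => ⨅ n, dyckPrefixDensity j n
  have hL (k : ℕ) : Tendsto (dyckPrefixDensity k) atTop (𝓝 (L k)) :=
    tendsto_atTop_ciInf (antitone_dyckPrefixDensity k)
      ⟨0, Set.forall_mem_range.mpr (dyckPrefixDensity_nonneg k)⟩
  have hL_succ (k : ℕ) : Tendsto (fun n => 2 * dyckPrefixDensity k (n + 1)) atTop (𝓝 (2 * L k)) :=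
    ((hL k).comp (tendsto_add_atTop_nat 1)).const_mul 2
  have hbound (k : ℕ) : |L k| ≤ 1 := abs_le.mpr
    ⟨by linarith [ge_of_tendsto' (hL k) (dyckPrefixDensity_nonneg k)],
      le_of_tendsto' (hL k) (dyckPrefixDensity_le_one k)⟩
  have hzero : L = 0 := eq_zero_of_abs_le_of_two_mul_eq hbound
    (tendsto_nhds_unique ((hL_succ 0).congr dyckPrefixDensity_zero_succ) (hL 1))
    (fun k => tendsto_nhds_unique ((hL_succ (k + 1)).congr (dyckPrefixDensity_succ_succ k))
      ((hL (k + 2)).add (hL k)))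
  simpa [hzero] using hL k

theorem hasSum_uDyck_div_two_pow (k : ℕ) : HasSum (fun n => (uDyck k n : ℝ) / 2 ^ n) 2 := by
  rw [hasSum_iff_tendsto_nat_of_nonneg (fun n => by positivity)]
  simp only [uDyck_div_two_pow, Finset.sum_range_sub' (fun n => 2 * dyckPrefixDensity k n)]
  simpa [dyckPrefixDensity, dyckPrefixCount] using
    ((tendsto_dyckPrefixDensity k).const_mul 2).const_sub (2 : ℝ)

theorem hasSum_uDyck_two_mul_add (k r : ℕ) (hr : k % 2 = r) :
    HasSum (fun i => (uDyck k (2 * i + r) : ℝ) / 2 ^ (2 * i + r)) 2 := by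
  refine (Function.Injective.hasSum_iff (g := (2 * · + r)) (fun _ _ h => by simpa using h) ?_).mpr
    (hasSum_uDyck_div_two_pow k)
  intro n hn
  simp [uDyck_eq_zero_of_forall_ne (k := k) (n := n) fun j hj =>
    hn ⟨k / 2 + j, by dsimp only; omega⟩]

theorem stmt_19 (m : ℕ) :
    HasSum (fun i : ℕ => if m ≤ i then (uDyck (2 * m) (2 * i) : ℝ) / 4 ^ i else 0) 2 ∧
    HasSum (fun i : ℕ => if m ≤ i then (uDyck (2 * m + 1) (2 * i + 1) : ℝ) / 4 ^ i else 0) 4 := by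
  have hpow (i : ℕ) : (4 : ℝ) ^ i = 2 ^ (2 * i) := by rw [pow_mul]; norm_num
  constructor
  · refine (hasSum_uDyck_two_mul_add (2 * m) 0 (by simp)).congr_fun fun i => ?_
    split_ifs with hi
    · simp [hpow]
    · simp [uDyck_eq_zero_of_lt (show 2 * i < 2 * m by omega)]
  · have hodd := (hasSum_uDyck_two_mul_add (2 * m + 1) 1 (by omega)).mul_left 2
    rw [show (2 : ℝ) * 2 = 4 by norm_num] at hodd
    refine hodd.congr_fun fun i => ?_
    split_ifs with hi
    · rw [hpow, pow_succ]
      field_simp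
    · simp [uDyck_eq_zero_of_lt (show 2 * i + 1 < 2 * m + 1 by omega)]
end
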